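/- Let M be a 2t × 2t matrix over Z_m whose t × t top-left block is A, whose t × t bottom-right block is B, and whose t × t top-right block is the zero matrix (the bottom-left block is arbitrary). Then colrank(A) + colrank(B) ≤ colrank(M). -/

import Mathlib

/-!
Restricting the columns of `M = [[A, 0], [C, B]]` to the top coordinates maps `colspan M` onto a
group containing `colspan A`. The columns through `B` lie in the kernel of that restriction (the
top-right block vanishes), and their bottom coordinates generate `colspan B`, so the kernel is at
least as large as `colspan B`. Hence `|colspan A| * |colspan B| ≤ |image| * |kernel| = |colspan M|`,
and taking `log_m` gives the claim.
-/

/-- The column rank of a square matrix over `ZMod m` (with arbitrary index type):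
`log_m` of the size of the additive subgroup generated by the columns of `M`. -/
noncomputable def colrank {m : ℕ} {ι : Type} (M : Matrix ι ι (ZMod m)) : ℝ :=
  Real.logb (m : ℝ)
    (((AddSubgroup.closure (Set.range fun j => fun i => M i j) :
      AddSubgroup (ι → ZMod m)) : Set (ι → ZMod m)).ncard : ℝ)

namespace AddSubgroup

variable {G G₁ G₂ : Type*} [AddGroup G] [AddGroup G₁] [AddGroup G₂]

theorem card_map_mul_card_inf_ker (f : G →+ G₁) (H : AddSubgroup G) :
    Nat.card (H.map f) * Nat.card ↥(H ⊓ f.ker) = Nat.card H := by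
  have hker : Nat.card (f.domRestrict H).ker = Nat.card ↥(H ⊓ f.ker) := by
    rw [AddMonoidHom.ker_domRestrict, ← card_map_of_injective H.subtype_injective,
      addSubgroupOf_map_subtype, inf_comm]
  rw [← hker, ← AddMonoidHom.domRestrict_range, ← index_ker, mul_comm, card_mul_index]

theorem card_map_le (f : G →+ G₁) (H : AddSubgroup G) [Finite H] :
    Nat.card (H.map f) ≤ Nat.card H :=
  Nat.card_le_card_of_surjective _ (f.addSubgroupMap_surjective H)

theorem card_mul_card_le_of_le_map (f : G →+ G₁) (g : G →+ G₂) {H : AddSubgroup G} [Finite H]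
    {K₁ : AddSubgroup G₁} {K₂ : AddSubgroup G₂} (h₁ : K₁ ≤ H.map f)
    (h₂ : K₂ ≤ (H ⊓ f.ker).map g) : Nat.card K₁ * Nat.card K₂ ≤ Nat.card H := by
  have : Finite ↥(H ⊓ f.ker) := Set.Finite.subset (Set.toFinite (H : Set G)) inf_le_left
  have : Finite (H.map f) := Finite.of_surjective _ (f.addSubgroupMap_surjective H)
  have : Finite ((H ⊓ f.ker).map g) := Finite.of_surjective _ (g.addSubgroupMap_surjective _)
  calc Nat.card K₁ * Nat.card K₂ ≤ Nat.card (H.map f) * Nat.card ↥(H ⊓ f.ker) :=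
        Nat.mul_le_mul (card_le_of_le h₁) ((card_le_of_le h₂).trans (card_map_le g _))
    _ = Nat.card H := card_map_mul_card_inf_ker f H

end AddSubgroup

namespace Matrix

variable {R : Type*} [AddCommGroup R] {l m n o : Type*}

def colspan (M : Matrix m n R) : AddSubgroup (m → R) :=
  AddSubgroup.closure (Set.range fun j i => M i j)

variable (A : Matrix n l R) (B : Matrix o m R) (C : Matrix o l R)

theorem colspan_le_map_colspan_fromBlocks :
    colspan A ≤
      (colspan (fromBlocks A 0 C B)).map (LinearMap.funLeft ℤ R Sum.inl).toAddMonoidHom := by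
  rw [colspan, AddSubgroup.closure_le]
  rintro _ ⟨j, rfl⟩
  exact ⟨_, AddSubgroup.subset_closure ⟨Sum.inl j, rfl⟩, rfl⟩

theorem colspan_le_map_colspan_fromBlocks_inf_ker :
    colspan B ≤
      (colspan (fromBlocks A 0 C B) ⊓ (LinearMap.funLeft ℤ R Sum.inl).toAddMonoidHom.ker).map
        (LinearMap.funLeft ℤ R Sum.inr).toAddMonoidHom := by
  rw [colspan, AddSubgroup.closure_le]
  rintro _ ⟨j, rfl⟩
  refine ⟨_, ⟨AddSubgroup.subset_closure ⟨Sum.inr j, rfl⟩, ?_⟩, rfl⟩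
  ext i
  simp

theorem card_colspan_mul_card_colspan_le [Finite R] [Finite n] [Finite o] :
    Nat.card (colspan A) * Nat.card (colspan B) ≤ Nat.card (colspan (fromBlocks A 0 C B)) :=
  AddSubgroup.card_mul_card_le_of_le_map _ _ (colspan_le_map_colspan_fromBlocks A B C)
    (colspan_le_map_colspan_fromBlocks_inf_ker A B C)

end Matrix

theorem colrank_eq_logb_card_colspan {m : ℕ} {ι : Type} (M : Matrix ι ι (ZMod m)) :
    colrank M = Real.logb m (Nat.card M.colspan) := by
  rw [colrank, ← Nat.card_coe_set_eq]
  rfl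

/-- Claim 4.6: for a block lower-triangular matrix `[[A, 0], [C, B]]`,
`colrank(A) + colrank(B) ≤ colrank(M)`. -/
theorem colrank_block_triangular (m t : ℕ) (hm : 2 ≤ m)
    (A B C : Matrix (Fin t) (Fin t) (ZMod m)) :
    colrank A + colrank B ≤ colrank (Matrix.fromBlocks A 0 C B) := by
  have : NeZero m := ⟨by omega⟩
  have hpos (M : Matrix (Fin t) (Fin t) (ZMod m)) : (0 : ℝ) < Nat.card M.colspan := by
    exact_mod_cast Nat.card_pos
  simp only [colrank_eq_logb_card_colspan]
  rw [← Real.logb_mul (hpos A).ne' (hpos B).ne']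
  exact Real.logb_le_logb_of_le (by exact_mod_cast hm) (mul_pos (hpos A) (hpos B))
    (by exact_mod_cast Matrix.card_colspan_mul_card_colspan_le A B C)
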